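/- arXiv:1408.1560 — 6 statements merged into one kernel-verified Lean document; each statement's English description precedes it below -/
import Mathlib

section
/- Let R be a finite commutative ring admitting a generating character χ, let N be a positive integer, let C be an R-submodule of R^N, and let v ∈ R^N. Then ∑_{u ∈ C} χ(⟨u,v⟩) = |C| if v ∈ C^⊥, and ∑_{u ∈ C} χ(⟨u,v⟩) = 0 otherwise. -/
open scoped Classical

/-- For a finite commutative ring `R` with a generating character `χ`, a linear code
`C ⊆ R^N` and a vector `v ∈ R^N`: `∑_{u ∈ C} χ(⟨u,v⟩) = |C|` if `v ∈ C^⊥`, and the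
sum is `0` otherwise. Here `⟨u,v⟩ = ∑_j u_j v_j` and
`C^⊥ = {v : ⟨u,v⟩ = 0 for all u ∈ C}`. -/
theorem sum_character_inner_product_over_code
    {R : Type*} [CommRing R] [Fintype R]
    (χ : AddChar R ℂ)
    (hχ : ∀ J : Ideal R, (∀ a ∈ J, χ a = 1) → J = ⊥)
    (N : ℕ) (hN : 0 < N)
    (C : Submodule R (Fin N → R)) (v : Fin N → R) :
    ((∀ u ∈ C, ∑ j, u j * v j = 0) →
        ∑ u : C, χ (∑ j, (u : Fin N → R) j * v j) = (Fintype.card C : ℂ)) ∧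
    ((¬ ∀ u ∈ C, ∑ j, u j * v j = 0) →
        ∑ u : C, χ (∑ j, (u : Fin N → R) j * v j) = 0) := by
  -- the inner product with `v` as a linear map
  set f : (Fin N → R) →ₗ[R] R :=
    { toFun := fun u => ∑ j, u j * v j
      map_add' := by
        intro a b
        simp [add_mul, Finset.sum_add_distrib]
      map_smul' := by
        intro r a
        simp [Finset.mul_sum, mul_assoc] } with hf
  have hfapp : ∀ u : Fin N → R, f u = ∑ j, u j * v j := fun u => rfl
  constructor
  · intro h
    have : ∀ u : C, χ (∑ j, (u : Fin N → R) j * v j) = 1 := by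
      intro u
      rw [h u u.2]
      exact χ.map_zero_eq_one
    rw [Finset.sum_congr rfl fun u _ => this u]
    simp
  · intro h
    push_neg at h
    obtain ⟨u1, hu1, hne⟩ := h
    set J : Ideal R := C.map f with hJ
    have hJne : ¬ ∀ a ∈ J, χ a = 1 := by
      intro hall
      have hbot := hχ J hall
      have hmem : f u1 ∈ J := Submodule.mem_map_of_mem hu1
      rw [hbot] at hmem
      exact hne (by simpa [hfapp] using hmem)
    push_neg at hJne
    obtain ⟨a, haJ, ha⟩ := hJne
    obtain ⟨u0, hu0, rfl⟩ := haJ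
    set S : ℂ := ∑ u : C, χ (∑ j, (u : Fin N → R) j * v j) with hS
    have key : χ (f u0) * S = S := by
      rw [hS, Finset.mul_sum]
      refine Fintype.sum_equiv (Equiv.addLeft (⟨u0, hu0⟩ : C)) _ _ ?_
      intro u
      have h2 : ((Equiv.addLeft (⟨u0, hu0⟩ : C) u : C) : Fin N → R) = u0 + (u : Fin N → R) := rfl
      rw [h2, ← hfapp, ← hfapp, map_add, AddChar.map_add_eq_mul]
    have : (1 - χ (f u0)) * S = 0 := by linear_combination -key
    rcases mul_eq_zero.mp this with h0 | h0
    · exact absurd (by linear_combination -h0) ha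
    · exact h0
end

section
/- Let R be a finite commutative ring admitting a generating character χ, let N be a positive integer, let C be an R-submodule of R^N, and let f : R^N → ℂ be any function. Define the Hadamard transform f̃(u) = ∑_{v ∈ R^N} χ(⟨u,v⟩) f(v) for u ∈ R^N. Then ∑_{v ∈ C^⊥} f(v) = (1/|C|) ∑_{u ∈ C} f̃(u). -/
open scoped Classical

/-!
Summing `χ ⟨u, v⟩` over `u ∈ C` gives `|C|` when `v ∈ C^⊥` and `0` otherwise: the map
`u ↦ ⟨u, v⟩` is `R`-linear, so its image is an ideal, and a generating character is nontrivial
on every nonzero ideal, hence on that image unless `v ∈ C^⊥`. Exchanging the two sums on the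
Hadamard side therefore leaves `|C|` times the sum of `f` over `C^⊥`.
-/

namespace AddChar

variable {R M S : Type*} [CommRing R] [AddCommGroup M] [Module R M]

def IsGenerating [Monoid S] (χ : AddChar R S) : Prop :=
  ∀ J : Ideal R, (∀ a ∈ J, χ a = 1) → J = ⊥

lemma IsGenerating.compAddMonoidHom_linearMap_eq_zero_iff [CommMonoid S] {χ : AddChar R S}
    (hχ : χ.IsGenerating) (φ : M →ₗ[R] R) :
    χ.compAddMonoidHom φ.toAddMonoidHom = 0 ↔ φ = 0 := by
  refine ⟨fun h => ?_, fun h => by ext m; simp [h]⟩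
  have hrange : LinearMap.range φ = ⊥ := hχ _ <| by
    rintro _ ⟨m, rfl⟩
    simpa using DFunLike.congr_fun h m
  exact LinearMap.range_eq_bot.mp hrange

lemma IsGenerating.sum_linearMap_eq_ite [CommRing S] [IsDomain S] [Fintype M]
    {χ : AddChar R S} (hχ : χ.IsGenerating) (φ : M →ₗ[R] R) :
    ∑ m, χ (φ m) = if φ = 0 then (Fintype.card M : S) else 0 := by
  simpa only [hχ.compAddMonoidHom_linearMap_eq_zero_iff φ, compAddMonoidHom_apply,
    LinearMap.toAddMonoidHom_coe] using sum_eq_ite (χ.compAddMonoidHom φ.toAddMonoidHom)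

end AddChar

section PoissonSummation

variable {R M V K : Type*} [CommRing R] [AddCommGroup M] [Module R M]
  [AddCommGroup V] [Module R V] [Field K] {χ : AddChar R K}

lemma AddChar.IsGenerating.sum_pairing_eq_ite (hχ : χ.IsGenerating)
    (B : M →ₗ[R] V →ₗ[R] R) (C : Submodule R M) [Fintype C] (v : V) :
    ∑ u : C, χ (B u v) = if ∀ u ∈ C, B u v = 0 then (Fintype.card C : K) else 0 := by
  have hφ : (B.flip v).comp C.subtype = 0 ↔ ∀ u ∈ C, B u v = 0 := by
    simp [LinearMap.ext_iff]
  simpa [hφ] using hχ.sum_linearMap_eq_ite ((B.flip v).comp C.subtype)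

theorem AddChar.IsGenerating.sum_orthogonal_eq_inv_card_mul_sum [CharZero K] [Fintype V]
    (hχ : χ.IsGenerating) (B : M →ₗ[R] V →ₗ[R] R) (C : Submodule R M) [Fintype C]
    (f : V → K) :
    ∑ v ∈ Finset.univ.filter (fun v => ∀ u ∈ C, B u v = 0), f v
      = (Fintype.card C : K)⁻¹ * ∑ u : C, ∑ v, χ (B u v) * f v := by
  have hC : (Fintype.card C : K) ≠ 0 := Nat.cast_ne_zero.mpr Fintype.card_ne_zero
  calc ∑ v ∈ Finset.univ.filter (fun v => ∀ u ∈ C, B u v = 0), f v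
      = (Fintype.card C : K)⁻¹ * ∑ v,
          (if ∀ u ∈ C, B u v = 0 then (Fintype.card C : K) else 0) * f v := by
        simp only [Finset.sum_filter, Finset.mul_sum, ite_mul, zero_mul, mul_ite, mul_zero,
          inv_mul_cancel_left₀ hC]
    _ = (Fintype.card C : K)⁻¹ * ∑ u : C, ∑ v, χ (B u v) * f v := by
        simp only [← hχ.sum_pairing_eq_ite B C, Finset.sum_mul]
        rw [Finset.sum_comm]

end PoissonSummation

theorem sum_over_dual_code_eq_sum_hadamard_transform_general
    {R : Type*} [CommRing R] [Fintype R]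
    (χ : AddChar R ℂ)
    (hχ : ∀ J : Ideal R, (∀ a ∈ J, χ a = 1) → J = ⊥)
    (N : ℕ)
    (C : Submodule R (Fin N → R))
    (f : (Fin N → R) → ℂ) :
    ∑ v ∈ Finset.univ.filter (fun v : Fin N → R => ∀ u ∈ C, ∑ j, u j * v j = 0), f v
      = (Fintype.card C : ℂ)⁻¹ *
          ∑ u : C, ∑ v : Fin N → R, χ (∑ j, (u : Fin N → R) j * v j) * f v := by
  simpa only [dotProductBilin_apply_apply, dotProduct] using
    AddChar.IsGenerating.sum_orthogonal_eq_inv_card_mul_sum (χ := χ) hχ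
      (dotProductBilin R R) C f

/-- Hadamard transform / Poisson summation for a linear code `C ⊆ R^N` over a finite
commutative ring `R` with a generating character `χ`: for any `f : R^N → ℂ`,
`∑_{v ∈ C^⊥} f(v) = (1/|C|) ∑_{u ∈ C} f̃(u)` where
`f̃(u) = ∑_{v ∈ R^N} χ(⟨u,v⟩) f(v)`. -/
theorem sum_over_dual_code_eq_sum_hadamard_transform
    {R : Type*} [CommRing R] [Fintype R]
    (χ : AddChar R ℂ)
    (hχ : ∀ J : Ideal R, (∀ a ∈ J, χ a = 1) → J = ⊥)
    (N : ℕ) (hN : 0 < N)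
    (C : Submodule R (Fin N → R))
    (f : (Fin N → R) → ℂ) :
    ∑ v ∈ Finset.univ.filter (fun v : Fin N → R => ∀ u ∈ C, ∑ j, u j * v j = 0), f v
      = (Fintype.card C : ℂ)⁻¹ *
          ∑ u : C, ∑ v : Fin N → R, χ (∑ j, (u : Fin N → R) j * v j) * f v :=
  sum_over_dual_code_eq_sum_hadamard_transform_general χ hχ N C f
end

section
/- Let R be a finite commutative ring admitting a generating character χ, and fix a level structure with s levels of sizes n_1,…,n_s. Let C be an R-submodule of R^N with N = n_1+⋯+n_s, and for each level i let z_i : R^{n_i} → ℂ be an arbitrary assignment of a complex variable to each n_i-tuple. Then the byte poset level weight enumerator of the dual code satisfies the MacWilliams-type identity ∑_{v ∈ C^⊥} ∏_{i=1}^s z_i(v^i) = (1/|C|) ∑_{u ∈ C} ∏_{i=1}^s ( ∑_{b ∈ R^{n_i}} χ(⟨b, u^i⟩) z_i(b) ). -/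
open scoped Classical

private lemma addchar_map_sum {R : Type*} [CommRing R] (χ : AddChar R ℂ)
    {ι : Type*} (t : Finset ι) (f : ι → R) :
    χ (∑ i ∈ t, f i) = ∏ i ∈ t, χ (f i) := by
  induction t using Finset.cons_induction with
  | empty => simp
  | cons a t ha ih => rw [Finset.sum_cons, Finset.prod_cons, AddChar.map_add_eq_mul, ih]

/-- MacWilliams-type identity for the byte poset level weight enumerator of a linear
code over a finite commutative Frobenius ring. `R^N` is identified with
`Π i, R^{n i}` (the `s` levels/bytes), `C^⊥` is the dual with respect to
`⟨u,v⟩ = ∑_i ∑_j u_{ij} v_{ij}`, and `z i b` is the variable attached to the byte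
`b ∈ R^{n i}` in level `i`. -/
theorem byte_poset_level_weight_enumerator_macwilliams
    {R : Type*} [CommRing R] [Fintype R]
    (χ : AddChar R ℂ)
    (hχ : ∀ J : Ideal R, (∀ a ∈ J, χ a = 1) → J = ⊥)
    (s : ℕ) (hs : 0 < s) (n : Fin s → ℕ) (hn : ∀ i, 0 < n i)
    (C : Submodule R (Π i : Fin s, Fin (n i) → R))
    (z : Π i : Fin s, (Fin (n i) → R) → ℂ) :
    ∑ v ∈ Finset.univ.filter
        (fun v : Π i : Fin s, Fin (n i) → R => ∀ u ∈ C, ∑ i, ∑ j, u i j * v i j = 0),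
      ∏ i, z i (v i)
    = (Fintype.card C : ℂ)⁻¹ *
        ∑ u : C, ∏ i,
          ∑ b : Fin (n i) → R,
            χ (∑ j, b j * (u : Π i : Fin s, Fin (n i) → R) i j) * z i b := by
  classical
  -- the bilinear inner product as a linear map in the second variable, for fixed v
  have hcard : (Fintype.card C : ℂ) ≠ 0 := Nat.cast_ne_zero.2 Fintype.card_ne_zero
  -- linear map u ↦ ⟨v, u⟩
  let f : (Π i : Fin s, Fin (n i) → R) → (Π i : Fin s, Fin (n i) → R) →ₗ[R] R := fun v =>
    { toFun := fun u => ∑ i, ∑ j, v i j * u i j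
      map_add' := by
        intro u w
        simp only [Pi.add_apply, mul_add, Finset.sum_add_distrib]
      map_smul' := by
        intro r u
        simp only [Pi.smul_apply, smul_eq_mul, RingHom.id_apply, Finset.mul_sum,
          mul_left_comm] }
  -- the character on C attached to v
  let ψ : (Π i : Fin s, Fin (n i) → R) → AddChar C ℂ := fun v =>
    χ.compAddMonoidHom ((f v).toAddMonoidHom.comp C.subtype.toAddMonoidHom)
  have hψ : ∀ v : (Π i : Fin s, Fin (n i) → R), ψ v = 0 ↔ ∀ u ∈ C, ∑ i, ∑ j, u i j * v i j = 0 := by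
    intro v
    constructor
    · intro h u hu
      have hJ : Submodule.map (f v) C = ⊥ := by
        refine hχ _ ?_
        rintro a ⟨w, hw, rfl⟩
        exact AddChar.eq_zero_iff.1 h ⟨w, hw⟩
      have : f v u = 0 := by
        have : f v u ∈ Submodule.map (f v) C := ⟨u, hu, rfl⟩
        simpa [hJ] using this
      simpa [f, mul_comm] using this
    · intro h
      refine AddChar.eq_zero_iff.2 fun x => ?_
      have : f v x = 0 := by
        have := h x x.2
        simpa [f, mul_comm] using this
      simp [ψ, this]
  -- main computation
  rw [eq_comm, inv_mul_eq_iff_eq_mul₀ hcard]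
  calc
    ∑ u : C, ∏ i, ∑ b : Fin (n i) → R,
        χ (∑ j, b j * (u : Π i : Fin s, Fin (n i) → R) i j) * z i b
      = ∑ u : C, ∑ v : (Π i : Fin s, Fin (n i) → R), ∏ i, χ (∑ j, v i j * (u : Π i : Fin s, Fin (n i) → R) i j) * z i (v i) := by
        refine Finset.sum_congr rfl fun u _ => ?_
        exact Fintype.prod_sum fun i b => χ (∑ j, b j * (u : Π i : Fin s, Fin (n i) → R) i j) * z i b
    _ = ∑ v : (Π i : Fin s, Fin (n i) → R), (∑ u : C, ψ v u) * ∏ i, z i (v i) := by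
        rw [Finset.sum_comm]
        refine Finset.sum_congr rfl fun v _ => ?_
        rw [Finset.sum_mul]
        refine Finset.sum_congr rfl fun u _ => ?_
        rw [Finset.prod_mul_distrib]
        congr 1
        simp only [ψ, AddChar.compAddMonoidHom_apply, AddMonoidHom.coe_comp,
          Function.comp_apply, LinearMap.toAddMonoidHom_coe]
        have hfv : (f v) (C.subtype u) = ∑ i, ∑ j, v i j * (u : Π i : Fin s, Fin (n i) → R) i j := rfl
        rw [hfv, addchar_map_sum]
    _ = ∑ v : (Π i : Fin s, Fin (n i) → R), (if ∀ u ∈ C, ∑ i, ∑ j, u i j * v i j = 0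
          then (Fintype.card C : ℂ) else 0) * ∏ i, z i (v i) := by
        refine Finset.sum_congr rfl fun v _ => ?_
        rw [AddChar.sum_eq_ite (ψ v)]
        congr 1
        simp [hψ v]
    _ = (Fintype.card C : ℂ) * ∑ v ∈ Finset.univ.filter
          (fun v : (Π i : Fin s, Fin (n i) → R) => ∀ u ∈ C, ∑ i, ∑ j, u i j * v i j = 0), ∏ i, z i (v i) := by
        rw [Finset.mul_sum, Finset.sum_filter]
        refine Finset.sum_congr rfl fun v _ => ?_
        split_ifs <;> simp
end

section
/- Let R be a finite commutative ring with q elements admitting a generating character, fix a level structure with s levels of sizes n_1,…,n_s, let C be an R-submodule of R^N with N = n_1+⋯+n_s, and let z_{j,p} ∈ ℂ for 1 ≤ j ≤ s and 0 ≤ p ≤ n_j. Then the complete poset level weight enumerator of the dual code satisfies ∑_{v ∈ C^⊥} ∏_{j=1}^s z_{j, w(v^j)} = (1/|C|) ∑_{u ∈ C} ∏_{j=1}^s ( ∑_{p=0}^{n_j} [ ∑_{a=0}^{p} (−1)^a (q−1)^{p−a} · C(w(u^j), a) · C(n_j − w(u^j), p−a) ] z_{j,p} ), where C(m,k) denotes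 the binomial coefficient (with C(m,k) = 0 for k > m). -/
open scoped Classical
open Polynomial Finset

set_option linter.unusedSectionVars false
set_option linter.unusedVariables false
set_option maxHeartbeats 1000000

section MWAux

lemma mw_map_sum {R : Type*} [CommRing R] (χ : AddChar R ℂ) {ι : Type*} (s : Finset ι)
    (f : ι → R) : χ (∑ i ∈ s, f i) = ∏ i ∈ s, χ (f i) := by
  classical
  induction s using Finset.cons_induction with
  | empty => simp
  | cons a s ha ih => rw [Finset.sum_cons, Finset.prod_cons, χ.map_add_eq_mul, ih]

lemma mw_sum_char {R : Type*} [CommRing R] [Fintype R] (χ : AddChar R ℂ)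
    (hχ : ∀ J : Ideal R, (∀ a ∈ J, χ a = 1) → J = ⊥) {r : R} (hr : r ≠ 0) :
    ∑ y : R, χ (r * y) = 0 := by
  have h1 : ∃ y : R, χ (r * y) ≠ 1 := by
    by_contra h
    push_neg at h
    have hJ : Ideal.span {r} = ⊥ := by
      refine hχ _ fun a ha => ?_
      obtain ⟨c, hc⟩ := Ideal.mem_span_singleton'.mp ha
      rw [← hc, mul_comm]; exact h c
    exact hr (Ideal.span_singleton_eq_bot.mp hJ)
  obtain ⟨y₀, hy₀⟩ := h1
  have key : χ (r * y₀) * ∑ y : R, χ (r * y) = ∑ y : R, χ (r * y) := by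
    rw [Finset.mul_sum]
    refine Fintype.sum_equiv (Equiv.addLeft y₀) _ _ fun y => ?_
    rw [Equiv.coe_addLeft, mul_add, χ.map_add_eq_mul]
  have h2 : (χ (r * y₀) - 1) * ∑ y : R, χ (r * y) = 0 := by
    rw [sub_mul, one_mul, key, sub_self]
  rcases mul_eq_zero.mp h2 with h | h
  · exact absurd (by linear_combination h : χ (r * y₀) = 1) hy₀
  · exact h

lemma mw_coeff_binom (c : ℂ) (m p : ℕ) :
    ((1 + Polynomial.C c * X) ^ m).coeff p = c ^ p * m.choose p := by
  rw [add_comm, add_pow, Polynomial.finset_sum_coeff]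
  have h : ∀ k ∈ Finset.range (m + 1),
      ((Polynomial.C c * X) ^ k * 1 ^ (m - k) * (m.choose k : ℂ[X])).coeff p
        = if p = k then c ^ k * m.choose k else 0 := by
    intro k hk
    rw [one_pow, mul_one, mul_pow, ← Polynomial.C_pow, ← Polynomial.C_eq_natCast,
      mul_assoc, mul_comm (X ^ k), ← mul_assoc, ← Polynomial.C_mul, Polynomial.coeff_C_mul,
      Polynomial.coeff_X_pow]
    split <;> simp
  rw [Finset.sum_congr rfl h, Finset.sum_ite_eq]
  split_ifs with h
  · rfl
  · rw [Finset.mem_range, not_lt] at h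
    rw [Nat.choose_eq_zero_of_lt h]
    simp

variable {R : Type*} [CommRing R] [Fintype R] [DecidableEq R]

lemma mw_factor (χ : AddChar R ℂ)
    (hχ : ∀ J : Ideal R, (∀ a ∈ J, χ a = 1) → J = ⊥) (r : R) :
    ∑ y : R, Polynomial.C (χ (r * y)) * X ^ (if y = (0 : R) then 0 else 1)
      = if r = 0 then 1 + Polynomial.C ((Fintype.card R : ℂ) - 1) * X else 1 - X := by
  calc ∑ y : R, Polynomial.C (χ (r * y)) * X ^ (if y = (0:R) then 0 else 1)
      = ∑ y : R, (if y = 0 then 1 else Polynomial.C (χ (r * y)) * X) := by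
        refine Finset.sum_congr rfl fun y _ => ?_
        split_ifs with h <;> simp [h]
    _ = 1 + ∑ y ∈ Finset.univ.erase (0:R), Polynomial.C (χ (r * y)) * X := by
        rw [← Finset.add_sum_erase _ _ (Finset.mem_univ (0:R))]
        rw [if_pos rfl]
        congr 1
        exact Finset.sum_congr rfl fun y hy => if_neg (Finset.ne_of_mem_erase hy)
    _ = 1 + Polynomial.C (∑ y ∈ Finset.univ.erase (0:R), χ (r * y)) * X := by
        rw [map_sum, Finset.sum_mul]
    _ = _ := by
        split_ifs with h
        · subst h
          congr 2
          simp only [zero_mul, AddChar.map_zero_eq_one]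
          rw [Finset.sum_const, nsmul_eq_mul, mul_one,
            Finset.card_erase_of_mem (Finset.mem_univ _), Finset.card_univ,
            Nat.cast_sub Fintype.card_pos, Nat.cast_one]
        · have hs : ∑ y ∈ Finset.univ.erase (0:R), χ (r * y) = -1 := by
            rw [Finset.sum_erase_eq_sub (Finset.mem_univ (0:R)), mw_sum_char χ hχ h]
            simp
          rw [hs]
          simp [sub_eq_add_neg]

lemma mw_poly (χ : AddChar R ℂ)
    (hχ : ∀ J : Ideal R, (∀ a ∈ J, χ a = 1) → J = ⊥) (m : ℕ) (u : Fin m → R) :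
    ∑ x : Fin m → R, Polynomial.C (χ (∑ k, u k * x k)) * X ^ hammingNorm x
    = (1 - X) ^ hammingNorm u
        * (1 + Polynomial.C ((Fintype.card R : ℂ) - 1) * X) ^ (m - hammingNorm u) := by
  have hw : ∀ x : Fin m → R, hammingNorm x = ∑ k, (if x k = (0:R) then 0 else 1) := by
    intro x
    rw [hammingNorm, Finset.card_filter]
    exact Finset.sum_congr rfl fun k _ => by by_cases h : x k = 0 <;> simp [h]
  have hterm : ∀ x : Fin m → R,
      Polynomial.C (χ (∑ k, u k * x k)) * X ^ hammingNorm x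
        = ∏ k, (Polynomial.C (χ (u k * x k)) * X ^ (if x k = (0:R) then 0 else 1)) := by
    intro x
    rw [mw_map_sum, map_prod, hw x, ← Finset.prod_pow_eq_pow_sum, ← Finset.prod_mul_distrib]
  have hswap : (∑ x : Fin m → R,
        ∏ k, (Polynomial.C (χ (u k * x k)) * X ^ (if x k = (0:R) then 0 else 1)))
      = ∏ k, ∑ y : R, Polynomial.C (χ (u k * y)) * X ^ (if y = (0:R) then 0 else 1) :=
    (Fintype.prod_sum fun k y =>
      Polynomial.C (χ (u k * y)) * X ^ (if y = (0:R) then 0 else 1)).symm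
  rw [Finset.sum_congr rfl fun x _ => hterm x, hswap]
  rw [Finset.prod_congr rfl fun k _ => mw_factor χ hχ (u k)]
  rw [Finset.prod_ite, Finset.prod_const, Finset.prod_const]
  have h1 : (Finset.univ.filter fun k => ¬ u k = 0).card = hammingNorm u := by
    rw [hammingNorm]
  have h2 : (Finset.univ.filter fun k => u k = 0).card = m - hammingNorm u := by
    have h3 := Finset.card_filter_add_card_filter_not
      (s := (Finset.univ : Finset (Fin m))) (p := fun k => u k = 0)
    rw [h1] at h3
    rw [Finset.card_univ, Fintype.card_fin] at h3
    omega
  rw [h1, h2, mul_comm]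

lemma mw_level (χ : AddChar R ℂ)
    (hχ : ∀ J : Ideal R, (∀ a ∈ J, χ a = 1) → J = ⊥) (m : ℕ) (u : Fin m → R) (z : ℕ → ℂ) :
    ∑ x : Fin m → R, χ (∑ k, u k * x k) * z (hammingNorm x)
    = ∑ p ∈ Finset.range (m + 1),
        (∑ a ∈ Finset.range (p + 1), (-1 : ℂ) ^ a * ((Fintype.card R : ℂ) - 1) ^ (p - a)
          * (Nat.choose (hammingNorm u) a : ℂ)
          * (Nat.choose (m - hammingNorm u) (p - a) : ℂ)) * z p := by
  have hN : ∀ p : ℕ,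
      (∑ x ∈ Finset.univ.filter (fun x : Fin m → R => hammingNorm x = p), χ (∑ k, u k * x k))
      = ∑ a ∈ Finset.range (p + 1), (-1 : ℂ) ^ a * ((Fintype.card R : ℂ) - 1) ^ (p - a)
          * (Nat.choose (hammingNorm u) a : ℂ)
          * (Nat.choose (m - hammingNorm u) (p - a) : ℂ) := by
    intro p
    have hc := congrArg (fun q : ℂ[X] => q.coeff p) (mw_poly χ hχ m u)
    simp only [Polynomial.finset_sum_coeff, Polynomial.coeff_C_mul, Polynomial.coeff_X_pow,
      mul_ite, mul_one, mul_zero] at hc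
    have hX : (1 - X : ℂ[X]) = 1 + Polynomial.C (-1 : ℂ) * X := by
      rw [map_neg, Polynomial.C_1]; ring
    rw [hX, Polynomial.coeff_mul, Finset.Nat.sum_antidiagonal_eq_sum_range_succ_mk] at hc
    simp only [mw_coeff_binom] at hc
    have hL : (∑ x : Fin m → R, if p = hammingNorm x then χ (∑ k, u k * x k) else 0)
        = ∑ x ∈ Finset.univ.filter (fun x : Fin m → R => hammingNorm x = p),
            χ (∑ k, u k * x k) := by
      rw [Finset.sum_filter]
      exact Finset.sum_congr rfl fun x _ => if_congr eq_comm rfl rfl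
    rw [hL] at hc
    rw [hc]
    exact Finset.sum_congr rfl fun a _ => by ring
  have hmap : ∀ x : Fin m → R, x ∈ (Finset.univ : Finset (Fin m → R)) →
      hammingNorm x ∈ Finset.range (m + 1) := fun x _ =>
    Finset.mem_range.mpr (Nat.lt_succ_of_le
      (le_trans hammingNorm_le_card_fintype (le_of_eq (Fintype.card_fin m))))
  rw [← Finset.sum_fiberwise_of_maps_to hmap
    (fun x : Fin m → R => χ (∑ k, u k * x k) * z (hammingNorm x))]
  refine Finset.sum_congr rfl fun p hp => ?_
  rw [← hN p, Finset.sum_mul]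
  refine Finset.sum_congr rfl fun x hx => ?_
  rw [(Finset.mem_filter.mp hx).2]

/-- The linear functional `u ↦ ⟨u, v⟩`. -/
def mwL {R : Type*} [CommRing R] {s : ℕ} {n : Fin s → ℕ} (v : Π j : Fin s, Fin (n j) → R) :
    (Π j : Fin s, Fin (n j) → R) →ₗ[R] R where
  toFun u := ∑ j, ∑ k, u j k * v j k
  map_add' u u' := by simp [add_mul, Finset.sum_add_distrib]
  map_smul' c u := by simp [Finset.mul_sum, mul_assoc]

lemma mw_orth (χ : AddChar R ℂ)
    (hχ : ∀ J : Ideal R, (∀ a ∈ J, χ a = 1) → J = ⊥)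
    {s : ℕ} {n : Fin s → ℕ} (C : Submodule R (Π j : Fin s, Fin (n j) → R))
    (v : Π j : Fin s, Fin (n j) → R) :
    ∑ u : C, χ (∑ j, ∑ k, (u : Π j : Fin s, Fin (n j) → R) j k * v j k)
      = if (∀ u ∈ C, ∑ j, ∑ k, u j k * v j k = 0) then (Fintype.card C : ℂ) else 0 := by
  split_ifs with h
  · rw [Fintype.card_eq_sum_ones, Nat.cast_sum]
    refine Finset.sum_congr rfl fun u _ => ?_
    rw [h u u.2, AddChar.map_zero_eq_one, Nat.cast_one]
  · push_neg at h
    have hone : ∃ u₀ : C, χ (∑ j, ∑ k, (u₀ : Π j : Fin s, Fin (n j) → R) j k * v j k) ≠ 1 := by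
      by_contra hc
      push_neg at hc
      have hJ : Submodule.map (mwL v) C = ⊥ := by
        refine hχ _ fun a ha => ?_
        obtain ⟨u, hu, rfl⟩ := ha
        exact hc ⟨u, hu⟩
      obtain ⟨u, huC, hu⟩ := h
      refine hu ?_
      have hmem : mwL v u ∈ Submodule.map (mwL v) C := Submodule.mem_map_of_mem huC
      rw [hJ] at hmem
      simpa [mwL] using hmem
    obtain ⟨u₀, hu₀⟩ := hone
    set S := ∑ u : C, χ (∑ j, ∑ k, (u : Π j : Fin s, Fin (n j) → R) j k * v j k) with hS
    have key : χ (∑ j, ∑ k, (u₀ : Π j : Fin s, Fin (n j) → R) j k * v j k) * S = S := by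
      rw [hS, Finset.mul_sum]
      refine Fintype.sum_equiv (Equiv.addLeft u₀) _ _ fun u => ?_
      rw [← χ.map_add_eq_mul]
      congr 1
      rw [Equiv.coe_addLeft]
      push_cast
      simp [add_mul, Finset.sum_add_distrib]
    have h2 : (χ (∑ j, ∑ k, (u₀ : Π j : Fin s, Fin (n j) → R) j k * v j k) - 1) * S = 0 := by
      rw [sub_mul, one_mul, key, sub_self]
    rcases mul_eq_zero.mp h2 with h3 | h3
    · exact absurd (by linear_combination h3) hu₀
    · exact h3

end MWAux

/-- MacWilliams-type identity for the complete poset level weight enumerator of a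
linear code over a finite commutative Frobenius ring with `q = |R|` elements.
`R^N` is identified with `Π j, R^{n j}` (the `s` levels), `w` is the Hamming weight
(`hammingNorm`), and `z j p` is the variable attached to Hamming weight `p` in
level `j`. -/
theorem complete_poset_level_weight_enumerator_macwilliams
    {R : Type*} [CommRing R] [Fintype R] [DecidableEq R]
    (hR : ∃ χ : AddChar R ℂ, ∀ J : Ideal R, (∀ a ∈ J, χ a = 1) → J = ⊥)
    (s : ℕ) (hs : 0 < s) (n : Fin s → ℕ) (hn : ∀ j, 0 < n j)
    (C : Submodule R (Π j : Fin s, Fin (n j) → R))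
    (z : Fin s → ℕ → ℂ) :
    ∑ v ∈ Finset.univ.filter
        (fun v : Π j : Fin s, Fin (n j) → R => ∀ u ∈ C, ∑ j, ∑ k, u j k * v j k = 0),
      ∏ j, z j (hammingNorm (v j))
    = (Fintype.card C : ℂ)⁻¹ *
        ∑ u : C, ∏ j,
          ∑ p ∈ Finset.range (n j + 1),
            (∑ a ∈ Finset.range (p + 1),
              (-1 : ℂ) ^ a * ((Fintype.card R : ℂ) - 1) ^ (p - a) *
                (Nat.choose (hammingNorm ((u : Π j : Fin s, Fin (n j) → R) j)) a : ℂ) *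
                (Nat.choose (n j - hammingNorm ((u : Π j : Fin s, Fin (n j) → R) j))
                  (p - a) : ℂ)) * z j p := by
  obtain ⟨χ, hχ⟩ := hR
  have hc0 : (Fintype.card C : ℂ) ≠ 0 := Nat.cast_ne_zero.mpr Fintype.card_ne_zero
  rw [eq_inv_mul_iff_mul_eq₀ hc0]
  calc (Fintype.card C : ℂ) * ∑ v ∈ Finset.univ.filter
        (fun v : Π j : Fin s, Fin (n j) → R => ∀ u ∈ C, ∑ j, ∑ k, u j k * v j k = 0),
      ∏ j, z j (hammingNorm (v j))
      = ∑ v : Π j : Fin s, Fin (n j) → R,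
          (if (∀ u ∈ C, ∑ j, ∑ k, u j k * v j k = 0) then (Fintype.card C : ℂ) else 0)
            * ∏ j, z j (hammingNorm (v j)) := by
        rw [Finset.mul_sum, Finset.sum_filter]
        exact Finset.sum_congr rfl fun v _ => by rw [ite_mul, zero_mul]
    _ = ∑ v : Π j : Fin s, Fin (n j) → R,
          (∑ u : C, χ (∑ j, ∑ k, (u : Π j : Fin s, Fin (n j) → R) j k * v j k))
            * ∏ j, z j (hammingNorm (v j)) := by
        exact Finset.sum_congr rfl fun v _ => by rw [mw_orth χ hχ C v]
    _ = ∑ u : C, ∑ v : Π j : Fin s, Fin (n j) → R,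
          χ (∑ j, ∑ k, (u : Π j : Fin s, Fin (n j) → R) j k * v j k)
            * ∏ j, z j (hammingNorm (v j)) := by
        simp_rw [Finset.sum_mul]
        exact Finset.sum_comm
    _ = ∑ u : C, ∏ j, ∑ x : Fin (n j) → R,
          χ (∑ k, (u : Π j : Fin s, Fin (n j) → R) j k * x k) * z j (hammingNorm x) := by
        refine Finset.sum_congr rfl fun u _ => ?_
        have h1 : ∀ v : Π j : Fin s, Fin (n j) → R,
            χ (∑ j, ∑ k, (u : Π j : Fin s, Fin (n j) → R) j k * v j k)
              * ∏ j, z j (hammingNorm (v j))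
            = ∏ j, (χ (∑ k, (u : Π j : Fin s, Fin (n j) → R) j k * v j k)
                * z j (hammingNorm (v j))) := by
          intro v
          rw [mw_map_sum, ← Finset.prod_mul_distrib]
        rw [Finset.sum_congr rfl fun v _ => h1 v]
        exact (Fintype.prod_sum fun j x =>
          χ (∑ k, (u : Π j : Fin s, Fin (n j) → R) j k * x k) * z j (hammingNorm x)).symm
    _ = _ := by
        refine Finset.sum_congr rfl fun u _ => Finset.prod_congr rfl fun j _ => ?_
        exact mw_level χ hχ (n j) ((u : Π j : Fin s, Fin (n j) → R) j) (z j)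
end

section
/- Let R be a finite commutative ring with q elements admitting a generating character χ, let n be a positive integer, and let u ∈ R^n have Hamming weight l. Then for every 0 ≤ p ≤ n, ∑_{v ∈ R^n, w(v) = p} χ(⟨u,v⟩) = ∑_{a=0}^{p} (−1)^a (q−1)^{p−a} · C(l, a) · C(n − l, p − a), where C(m,k) denotes the binomial coefficient (with C(m,k) = 0 for k > m). -/
/-!
Weight the sum over `v` by `X ^ w(v)`. Both `χ ⟨u, v⟩` and `X ^ w(v)` are products of
per-coordinate factors, so the generating polynomial factors as `∏ₖ (1 + X ∑_{x ≠ 0} χ (uₖ x))`.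
Since a generating character is primitive, `∑ₓ χ (c x)` is `q` for `c = 0` and `0` otherwise,
so the factor is `1 + (q - 1) X` where `uₖ = 0` and `1 - X` where `uₖ ≠ 0`. The generating
polynomial is therefore `(1 - X) ^ l * (1 + (q - 1) X) ^ (n - l)`, and the claimed sum is its
coefficient of `X ^ p`.
-/

open Finset Polynomial

lemma AddChar.map_sum_eq_prod {A M ι : Type*} [AddCommMonoid A] [CommMonoid M]
    (ψ : AddChar A M) (s : Finset ι) (f : ι → A) :
    ψ (∑ i ∈ s, f i) = ∏ i ∈ s, ψ (f i) := by
  induction s using Finset.cons_induction with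
  | empty => simp
  | cons a s _ ih => rw [sum_cons, prod_cons, map_add_eq_mul, ih]

lemma AddChar.isPrimitive_of_forall_ideal {R M : Type*} [CommRing R] [CommMonoid M]
    {ψ : AddChar R M} (hψ : ∀ J : Ideal R, (∀ a ∈ J, ψ a = 1) → J = ⊥) : ψ.IsPrimitive := by
  intro c hc hshift
  refine hc (Ideal.span_singleton_eq_bot.mp (hψ _ fun a ha => ?_))
  obtain ⟨x, rfl⟩ := Ideal.mem_span_singleton.mp ha
  simpa using DFunLike.congr_fun hshift x

lemma sum_prod_mul_pow_hammingNorm {ι β S : Type*} [Fintype ι] [DecidableEq ι] [Fintype β]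
    [DecidableEq β] [Zero β] [CommSemiring S] (g : ι → β → S) (t : S) :
    ∑ v : ι → β, (∏ i, g i (v i)) * t ^ hammingNorm v
      = ∏ i, (g i 0 + t * ∑ x ∈ {0}ᶜ, g i x) := by
  have hpow (v : ι → β) : t ^ hammingNorm v = ∏ i, if v i = 0 then 1 else t := by
    rw [hammingNorm, ← prod_const, prod_filter]
    exact prod_congr rfl fun i _ => by split_ifs <;> simp_all
  have hcoord (i : ι) :
      ∑ x, g i x * (if x = 0 then 1 else t) = g i 0 + t * ∑ x ∈ {0}ᶜ, g i x := by
    rw [Fintype.sum_eq_add_sum_compl 0, mul_sum]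
    simp only [if_pos, mul_one]
    congr 1
    exact sum_congr rfl fun x hx => by rw [if_neg (by simpa using hx), mul_comm]
  simp_rw [hpow, ← prod_mul_distrib, ← hcoord]
  exact (Fintype.prod_sum fun i x => g i x * if x = 0 then 1 else t).symm

lemma Polynomial.coeff_one_add_C_mul_X_pow {R : Type*} [CommSemiring R] (r : R) (m k : ℕ) :
    ((1 + C r * X) ^ m).coeff k = r ^ k * m.choose k := by
  have hterm (i : ℕ) :
      (C r * X) ^ i * 1 ^ (m - i) * (m.choose i : R[X]) = C (r ^ i * m.choose i) * X ^ i := by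
    simp only [one_pow, mul_one, mul_pow, C_mul, C_pow, ← C_eq_natCast]
    ring
  rw [add_comm, add_pow]
  simp_rw [hterm, finsetSum_coeff, coeff_C_mul_X_pow, sum_ite_eq, mem_range, Nat.lt_succ_iff]
  split_ifs with hk
  · rfl
  · simp [Nat.choose_eq_zero_of_lt (not_le.mp hk)]

lemma Polynomial.coeff_one_add_C_mul_X_pow_mul {R : Type*} [CommSemiring R] (r s : R) (l m p : ℕ) :
    ((1 + C r * X) ^ l * (1 + C s * X) ^ m).coeff p
      = ∑ a ∈ range (p + 1), r ^ a * s ^ (p - a) * l.choose a * m.choose (p - a) := by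
  simp only [coeff_mul, Nat.sum_antidiagonal_eq_sum_range_succ_mk, coeff_one_add_C_mul_X_pow]
  exact sum_congr rfl fun a _ => by ring

lemma Polynomial.coeff_sum_C_mul_X_pow {ι R : Type*} [Semiring R] (s : Finset ι) (f : ι → R)
    (d : ι → ℕ) (k : ℕ) :
    (∑ i ∈ s, C (f i) * X ^ d i).coeff k = ∑ i ∈ s with d i = k, f i := by
  simp only [finsetSum_coeff, coeff_C_mul_X_pow, sum_filter, eq_comm]

lemma AddChar.sum_C_mul_X_pow_hammingNorm {R S ι : Type*} [CommRing R] [Fintype R]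
    [DecidableEq R] [CommRing S] [IsDomain S] [Fintype ι] [DecidableEq ι] {ψ : AddChar R S}
    (hψ : ψ.IsPrimitive) (u : ι → R) :
    ∑ v : ι → R, C (ψ (∑ i, u i * v i)) * X ^ hammingNorm v
      = (1 + C (-1) * X) ^ hammingNorm u
          * (1 + C ((Fintype.card R : S) - 1) * X) ^ (Fintype.card ι - hammingNorm u) := by
  have hcoord (c : R) : C (ψ (c * 0)) + X * ∑ x ∈ {0}ᶜ, C (ψ (c * x))
      = if c = 0 then 1 + C ((Fintype.card R : S) - 1) * X else 1 + C (-1) * X := by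
    have hpunctured : ∑ x ∈ {0}ᶜ, ψ (c * x) = ∑ x, ψ (x * c) - 1 := by
      rw [← sum_compl_add_sum {0}]
      simp [mul_comm]
    rw [← map_sum, hpunctured, sum_mulShift c hψ, mul_zero, map_zero_eq_one, map_one]
    split_ifs
    · ring
    · rw [Nat.cast_zero, zero_sub]
      ring
  have hcard : #{i | u i = 0} = Fintype.card ι - hammingNorm u := by
    rw [hammingNorm, ← card_univ,
      ← card_filter_add_card_filter_not (s := univ) (fun i => u i = 0)]
    exact (Nat.add_sub_cancel _ _).symm
  calc ∑ v : ι → R, C (ψ (∑ i, u i * v i)) * X ^ hammingNorm v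
      = ∑ v : ι → R, (∏ i, C (ψ (u i * v i))) * X ^ hammingNorm v := by
        simp_rw [map_sum_eq_prod, map_prod]
    _ = ∏ i, if u i = 0 then 1 + C ((Fintype.card R : S) - 1) * X else 1 + C (-1) * X := by
        rw [sum_prod_mul_pow_hammingNorm (fun i x => C (ψ (u i * x)))]
        simp_rw [hcoord]
    _ = _ := by
        rw [prod_ite, prod_const, prod_const, hcard, mul_comm, hammingNorm]

theorem character_sum_over_fixed_hamming_weight_general
    {R : Type*} [CommRing R] [Fintype R] [DecidableEq R]
    (χ : AddChar R ℂ)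
    (hχ : ∀ J : Ideal R, (∀ a ∈ J, χ a = 1) → J = ⊥)
    (n : ℕ) (u : Fin n → R) (l : ℕ) (hl : hammingNorm u = l)
    (p : ℕ) :
    ∑ v ∈ Finset.univ.filter (fun v : Fin n → R => hammingNorm v = p),
        χ (∑ k, u k * v k)
      = ∑ a ∈ Finset.range (p + 1),
          (-1 : ℂ) ^ a * ((Fintype.card R : ℂ) - 1) ^ (p - a) *
            (Nat.choose l a : ℂ) * (Nat.choose (n - l) (p - a) : ℂ) := by
  have hgen := congrArg (coeff · p)
    (χ.sum_C_mul_X_pow_hammingNorm (AddChar.isPrimitive_of_forall_ideal hχ) u)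
  simpa only [coeff_sum_C_mul_X_pow, coeff_one_add_C_mul_X_pow_mul, Fintype.card_fin, hl]
    using hgen

/-- Key character sum: for a finite commutative ring `R` with `q` elements and a
generating character `χ`, and `u ∈ R^n` of Hamming weight `l`, for every `0 ≤ p ≤ n`,
`∑_{v ∈ R^n, w(v) = p} χ(⟨u,v⟩) = ∑_{a=0}^{p} (-1)^a (q-1)^{p-a} C(l,a) C(n-l,p-a)`. -/
theorem character_sum_over_fixed_hamming_weight
    {R : Type*} [CommRing R] [Fintype R] [DecidableEq R]
    (χ : AddChar R ℂ)
    (hχ : ∀ J : Ideal R, (∀ a ∈ J, χ a = 1) → J = ⊥)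
    (n : ℕ) (hn : 0 < n) (u : Fin n → R) (l : ℕ) (hl : hammingNorm u = l)
    (p : ℕ) (hp : p ≤ n) :
    ∑ v ∈ Finset.univ.filter (fun v : Fin n → R => hammingNorm v = p),
        χ (∑ k, u k * v k)
      = ∑ a ∈ Finset.range (p + 1),
          (-1 : ℂ) ^ a * ((Fintype.card R : ℂ) - 1) ^ (p - a) *
            (Nat.choose l a : ℂ) * (Nat.choose (n - l) (p - a) : ℂ) :=
  character_sum_over_fixed_hamming_weight_general χ hχ n u l hl p
end

section
/- Let R be a finite commutative ring, fix a level structure with s levels of sizes n_1,…,n_s and spotty parameters t_1,…,t_s with 1 ≤ t_j ≤ n_j, and set N = n_1+⋯+n_s. Then the m-spotty poset level distance d_MP(u,v) = ∑_{j=1}^s ⌈d(u^j, v^j)/t_j⌉ is a metric on R^N: d_MP(u,v) ≥ 0 with d_MP(u,v) = 0 if and only if u = v, d_MP(u,v) = d_MP(v,u), and d_MP(u,v) ≤ d_MP(u,w) + d_MP(w,v) for all u, v, w ∈ R^N. -/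
open scoped Classical

lemma ceil_div_add_le (a b t : ℕ) (ht : 1 ≤ t) :
    ⌈((a + b : ℕ) : ℚ) / (t : ℚ)⌉₊ ≤ ⌈(a : ℚ) / (t : ℚ)⌉₊ + ⌈(b : ℚ) / (t : ℚ)⌉₊ := by
  have htq : (0 : ℚ) < t := by exact_mod_cast ht
  have h1 : ((a + b : ℕ) : ℚ) / t = (a : ℚ) / t + (b : ℚ) / t := by
    push_cast; ring
  rw [h1]
  exact Nat.ceil_add_le _ _

/-- The m-spotty poset level distance
`d_MP(u,v) = ∑_j ⌈d(u^j, v^j)/t_j⌉` (with `d` the Hamming distance and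
`1 ≤ t j ≤ n j`) is a metric on `R^N ≅ Π j, R^{n j}`: it is nonnegative, vanishes
exactly on the diagonal, is symmetric, and satisfies the triangle inequality. -/
theorem m_spotty_poset_level_distance_is_metric
    {R : Type*} [CommRing R] [Fintype R] [DecidableEq R]
    (s : ℕ) (hs : 0 < s) (n : Fin s → ℕ) (t : Fin s → ℕ)
    (ht : ∀ j, 1 ≤ t j ∧ t j ≤ n j)
    (dMP : (Π j : Fin s, Fin (n j) → R) → (Π j : Fin s, Fin (n j) → R) → ℕ)
    (hdMP : ∀ u v, dMP u v = ∑ j, ⌈(hammingDist (u j) (v j) : ℚ) / (t j : ℚ)⌉₊) :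
    ∀ u v, 0 ≤ dMP u v ∧ (dMP u v = 0 ↔ u = v) ∧ dMP u v = dMP v u ∧
      ∀ w, dMP u v ≤ dMP u w + dMP w v := by
  intro u v
  refine ⟨Nat.zero_le _, ?_, ?_, ?_⟩
  · rw [hdMP, Finset.sum_eq_zero_iff]
    constructor
    · intro h
      funext j
      have hj := h j (Finset.mem_univ j)
      have htq : (0 : ℚ) < t j := by exact_mod_cast (ht j).1
      rw [Nat.ceil_eq_zero] at hj
      have : (hammingDist (u j) (v j) : ℚ) ≤ 0 := by
        have := (div_nonpos_iff.mp hj)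
        rcases this with ⟨h1, h2⟩ | ⟨h1, _⟩
        · have : (0:ℚ) < t j := by exact_mod_cast (ht j).1
          linarith
        · exact h1
      have : hammingDist (u j) (v j) = 0 := by exact_mod_cast le_antisymm this (by positivity)
      exact hammingDist_eq_zero.mp this
    · intro h j _
      subst h
      simp
  · rw [hdMP, hdMP]
    congr 1
    funext j
    rw [hammingDist_comm]
  · intro w
    rw [hdMP, hdMP, hdMP, ← Finset.sum_add_distrib]
    apply Finset.sum_le_sum
    intro j _
    calc ⌈(hammingDist (u j) (v j) : ℚ) / (t j : ℚ)⌉₊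
        ≤ ⌈((hammingDist (u j) (w j) + hammingDist (w j) (v j) : ℕ) : ℚ) / (t j : ℚ)⌉₊ := by
          apply Nat.ceil_le_ceil
          apply div_le_div_of_nonneg_right ?_ (by positivity)
          exact_mod_cast hammingDist_triangle (u j) (w j) (v j)
      _ ≤ _ := ceil_div_add_le _ _ _ (ht j).1
end
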